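/- Let s = (s₁,s₂), t = (t₁,t₂) ∈ [0,∞)² with s₁ ≥ s₂ > t₁ ≥ t₂ ≥ 0, let J : H^s(Ω) → H^t(Ω) be the canonical embedding J f = f, and let J_K = J P_K. Then there exists a constant C > 0 such that for all K ∈ ℕ: ‖J − J_K‖_{H^s → H^t} ≤ C (1 + K²)^{−α/2}, where α = s₂ − t₁. -/

import Mathlib

/-!
Removing the modes in `Λ_K` leaves only frequencies with `⟨k⟩ := max(1, |k₁|, |2k₂|) ≥ K`.
For every frequency `a_t(k) ≤ 3⟨k⟩^{2t₁}` (as `t₂ ≤ t₁`) and `⟨k⟩^{2s₂} ≤ a_s(k)` (as `s₂ ≤ s₁`),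
so on the remaining modes `a_t(k) ≤ 3⟨k⟩^{-2α} a_s(k) ≤ 3·2^α (1+K²)^{-α} a_s(k)`.
Summing against `|c_k(f)|²` gives the bound with `C = (3·2^α)^{1/2}`.
-/

open MeasureTheory Complex Filter Topology

noncomputable section

instance : Fact (0 < 2 * Real.pi) := ⟨by positivity⟩
instance : Fact (0 < Real.pi) := ⟨Real.pi_pos⟩

/-- The phase space `Ω = (ℝ/2πℤ) × (ℝ/πℤ)`. -/
abbrev Omg : Type := AddCircle (2 * Real.pi) × AddCircle Real.pi

/-- The normalised Lebesgue measure `dm = dx dy / (2π²)` on `Ω`. -/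
def mOmg : Measure Omg := (ENNReal.ofReal (2 * Real.pi ^ 2))⁻¹ • volume

/-- The Fourier basis functions `e_k(x,y) = exp(i k₁ x) exp(2 i k₂ y)`. -/
def eB (k : ℤ × ℤ) : Omg → ℂ := fun p => fourier k.1 p.1 * fourier k.2 p.2

/-- Fourier coefficient `c_k(f) = (f, e_k)_{L²}`. -/
def coef (k : ℤ × ℤ) (f : Omg → ℂ) : ℂ := ∫ p, f p * (starRingEnd ℂ) (eB k p) ∂mOmg

/-- Sobolev weight `a_s(k) = 1 + |k₁|^{2s₁} + |2k₂|^{2s₂}` (real exponents). -/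
def aW (s : ℝ × ℝ) (k : ℤ × ℤ) : ℝ :=
  1 + |(k.1 : ℝ)| ^ (2 * s.1) + |2 * (k.2 : ℝ)| ^ (2 * s.2)

/-- Membership in the Sobolev space `H^s(Ω)`. -/
def MemHs (s : ℝ × ℝ) (f : Omg → ℂ) : Prop :=
  MemLp f 2 mOmg ∧ Summable (fun k => aW s k * ‖coef k f‖ ^ 2)

/-- The Sobolev norm `‖f‖_{H^s}`. -/
def normHs (s : ℝ × ℝ) (f : Omg → ℂ) : ℝ :=
  Real.sqrt (∑' k, aW s k * ‖coef k f‖ ^ 2)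

/-- The doubling map `ℝ/πℤ → ℝ/2πℤ`, `y ↦ 2y`. -/
def dbl : AddCircle Real.pi → AddCircle (2 * Real.pi) :=
  AddCircle.equivAddCircle Real.pi (2 * Real.pi) Real.pi_ne_zero (by positivity)

/-- The inverse billiard collision map `φ(x,y) = (x - π + 2y, y)`. -/
def phi : Omg → Omg :=
  fun p => (p.1 - ((Real.pi : ℝ) : AddCircle (2 * Real.pi)) + dbl p.2, p.2)

/-- The composition operator `(C_φ f)(x,y) = f(φ(x,y))`. -/
def Cphi : (Omg → ℂ) → (Omg → ℂ) := fun f p => f (phi p)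

/-- The multiplication operator `(M_w f)(x,y) = w(x,y) f(x,y)`. -/
def Mw (w : Omg → ℝ) : (Omg → ℂ) → (Omg → ℂ) := fun f p => (w p : ℂ) * f p

/-- The transfer operator `L = M_w C_φ`. -/
def Lop (w : Omg → ℝ) : (Omg → ℂ) → (Omg → ℂ) := fun f => Mw w (Cphi f)

/-- The frequency cut-off set `Λ_K = {k : |k₁| < K, |k₂| < K}`. -/
def Lam (K : ℕ) : Finset (ℤ × ℤ) := Finset.Ioo (-(K : ℤ)) (K : ℤ) ×ˢ Finset.Ioo (-(K : ℤ)) (K : ℤ)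

/-- The Fourier projection `P_Λ f = ∑_{k ∈ Λ} c_k(f) e_k`. -/
def PL (Λ : Finset (ℤ × ℤ)) : (Omg → ℂ) → (Omg → ℂ) :=
  fun f p => ∑ k ∈ Λ, coef k f * eB k p

/-- The finite-rank approximation `L_K = P_K M_w C_φ P_K`. -/
def LK (w : Omg → ℝ) (K : ℕ) : (Omg → ℂ) → (Omg → ℂ) :=
  fun f => PL (Lam K) (Lop w (PL (Lam K) f))

/-- Operator norm of a map `T`, viewed from `H^s` to `H^t`. -/
def opN (s t : ℝ × ℝ) (T : (Omg → ℂ) → (Omg → ℂ)) : ℝ :=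
  sInf {M : ℝ | 0 ≤ M ∧ ∀ f, MemHs s f → normHs t (T f) ≤ M * normHs s f}

/-- `‖w‖_∞` for a (positive bounded) weight. -/
def wSup (w : Omg → ℝ) : ℝ := sSup (Set.range w)

/-- The standing assumptions on the weight `w`: smooth, positive, bounded away from
zero, `‖w‖_∞ < 1`, and independent of the first argument. -/
structure GoodWeight (w : Omg → ℝ) : Prop where
  pos : ∀ p, 0 < w p
  smooth : ∃ W : ℝ → ℝ, ContDiff ℝ (⊤ : ℕ∞) W ∧
    ∀ (x : AddCircle (2 * Real.pi)) (y : ℝ), w (x, (y : AddCircle Real.pi)) = W y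
  bdd_below : ∃ ε > 0, ∀ p, ε ≤ w p
  lt_one : sSup (Set.range w) < 1
  indep : ∀ (x x' : AddCircle (2 * Real.pi)) (y : AddCircle Real.pi), w (x, y) = w (x', y)

/-- The matrix `A = [[1,0],[1,1]]` acting on frequencies `(k₁,k₂) ↦ (k₁, k₁+k₂)`. -/
def Amap : ℤ × ℤ → ℤ × ℤ := fun k => (k.1, k.1 + k.2)

/-- `IsD i j f g` : `g = D_x^i D_y^j f` in the weak (Fourier) sense, both in `L²`. -/
def IsD (i j : ℕ) (f g : Omg → ℂ) : Prop :=
  MemLp f 2 mOmg ∧ MemLp g 2 mOmg ∧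
    ∀ k : ℤ × ℤ, coef k g = (Complex.I * (k.1 : ℂ)) ^ i * (2 * Complex.I * (k.2 : ℂ)) ^ j * coef k f

open AddCircle

lemma mOmg_eq_prod : mOmg = haarAddCircle.prod haarAddCircle := by
  have hvol : (volume : Measure Omg)
      = ENNReal.ofReal (2 * Real.pi ^ 2) • (haarAddCircle.prod haarAddCircle : Measure Omg) := by
    rw [Measure.volume_eq_prod, volume_eq_smul_haarAddCircle, volume_eq_smul_haarAddCircle,
      Measure.prod_smul_left, Measure.prod_smul_right, smul_smul,
      ← ENNReal.ofReal_mul (by positivity)]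
    ring_nf
  rw [mOmg, hvol, smul_smul, ENNReal.inv_mul_cancel (by positivity) ENNReal.ofReal_ne_top,
    one_smul]

instance : IsProbabilityMeasure mOmg := by
  rw [mOmg_eq_prod]; infer_instance

lemma continuous_eB (k : ℤ × ℤ) : Continuous (eB k) := by
  unfold eB; fun_prop

lemma integrable_mul_conj_eB {f : Omg → ℂ} (hf : Integrable f mOmg) (k : ℤ × ℤ) :
    Integrable (fun p => f p * starRingEnd ℂ (eB k p)) mOmg :=
  hf.mul_bdd (c := 1) (continuous_eB k).star.aestronglyMeasurable
    (Eventually.of_forall fun p => by simp [eB, Circle.norm_coe])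

lemma integral_fourier_neg_smul_fourier {T : ℝ} [Fact (0 < T)] (m n : ℤ) :
    ∫ x : AddCircle T, fourier (-m) x • fourier n x ∂haarAddCircle = if m = n then 1 else 0 := by
  simpa [fourierCoeff, Pi.single_apply] using congr_fun (fourierCoeff_fourier (T := T) n) m

lemma coef_eB (j k : ℤ × ℤ) : coef k (eB j) = if j = k then 1 else 0 := by
  have hsplit : (fun p : Omg => eB j p * starRingEnd ℂ (eB k p))
      = fun p => (fourier (-k.1) p.1 • fourier j.1 p.1) *
          (fourier (-k.2) p.2 • fourier j.2 p.2) := by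
    ext p; simp only [eB, map_mul, fourier_neg, smul_eq_mul]; ring
  rw [coef, hsplit, mOmg_eq_prod, integral_prod_mul (fun x => fourier (-k.1) x • fourier j.1 x)
    (fun y => fourier (-k.2) y • fourier j.2 y), integral_fourier_neg_smul_fourier,
    integral_fourier_neg_smul_fourier]
  simp only [Prod.ext_iff, eq_comm (a := j.1), eq_comm (a := j.2)]
  split_ifs <;> simp_all

lemma coef_sub {f g : Omg → ℂ} (hf : Integrable f mOmg) (hg : Integrable g mOmg) (k : ℤ × ℤ) :
    coef k (fun p => f p - g p) = coef k f - coef k g := by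
  simp only [coef, sub_mul]
  exact integral_sub (integrable_mul_conj_eB hf k) (integrable_mul_conj_eB hg k)

lemma continuous_PL (Λ : Finset (ℤ × ℤ)) (f : Omg → ℂ) : Continuous (PL Λ f) := by
  unfold PL; have := continuous_eB; fun_prop

lemma coef_PL (Λ : Finset (ℤ × ℤ)) (f : Omg → ℂ) (k : ℤ × ℤ) :
    coef k (PL Λ f) = if k ∈ Λ then coef k f else 0 := by
  have hint : ∀ j, Integrable (fun p => coef j f * (eB j p * starRingEnd ℂ (eB k p))) mOmg :=
    fun j => ((continuous_eB j).mul (continuous_eB k).star).integrable_of_hasCompactSupport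
      (HasCompactSupport.of_compactSpace _) |>.const_mul _
  calc coef k (PL Λ f)
      = ∑ j ∈ Λ, coef j f * coef k (eB j) := by
        unfold PL; rw [coef]
        simp only [Finset.sum_mul, mul_assoc]
        rw [integral_finsetSum _ fun j _ => hint j]
        simp only [integral_const_mul]; rfl
    _ = if k ∈ Λ then coef k f else 0 := by
        simp [coef_eB]

lemma coef_sub_PL {f : Omg → ℂ} (hf : Integrable f mOmg) (Λ : Finset (ℤ × ℤ)) (k : ℤ × ℤ) :
    coef k (fun p => f p - PL Λ f p) = if k ∈ Λ then 0 else coef k f := by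
  rw [coef_sub hf ((continuous_PL Λ f).integrable_of_hasCompactSupport
    (HasCompactSupport.of_compactSpace _)), coef_PL]
  split_ifs <;> simp

lemma aW_nonneg (s : ℝ × ℝ) (k : ℤ × ℤ) : 0 ≤ aW s k := by
  unfold aW; positivity

def freqMax (k : ℤ × ℤ) : ℝ := max 1 (max |(k.1 : ℝ)| |2 * (k.2 : ℝ)|)

lemma one_le_freqMax (k : ℤ × ℤ) : 1 ≤ freqMax k := le_max_left _ _

lemma aW_le_three_mul_freqMax_rpow {t₁ t₂ : ℝ} (ht₂ : 0 ≤ t₂) (htt : t₂ ≤ t₁) (k : ℤ × ℤ) :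
    aW (t₁, t₂) k ≤ 3 * freqMax k ^ (2 * t₁) := by
  have hM := one_le_freqMax k
  have h₀ : 1 ≤ freqMax k ^ (2 * t₁) := Real.one_le_rpow hM (by linarith)
  have h₁ : |(k.1 : ℝ)| ^ (2 * t₁) ≤ freqMax k ^ (2 * t₁) :=
    Real.rpow_le_rpow (abs_nonneg _) ((le_max_left _ _).trans (le_max_right _ _)) (by linarith)
  have h₂ : |2 * (k.2 : ℝ)| ^ (2 * t₂) ≤ freqMax k ^ (2 * t₁) :=
    (Real.rpow_le_rpow (abs_nonneg _) ((le_max_right _ _).trans (le_max_right _ _))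
      (by linarith)).trans (Real.rpow_le_rpow_of_exponent_le hM (by linarith))
  simp only [aW]
  linarith

lemma freqMax_rpow_le_aW {s₁ s₂ : ℝ} (hss : s₂ ≤ s₁) (k : ℤ × ℤ) :
    freqMax k ^ (2 * s₂) ≤ aW (s₁, s₂) k := by
  have h₁ : 0 ≤ |(k.1 : ℝ)| ^ (2 * s₁) := by positivity
  have h₂ : 0 ≤ |2 * (k.2 : ℝ)| ^ (2 * s₂) := by positivity
  simp only [aW]
  rcases max_choice 1 (max |(k.1 : ℝ)| |2 * (k.2 : ℝ)|) with h | h <;> rw [freqMax, h]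
  · simp only [Real.one_rpow]; linarith
  rcases max_choice |(k.1 : ℝ)| |2 * (k.2 : ℝ)| with h' | h' <;> rw [h'] <;> rw [h'] at h
  · have : 1 ≤ |(k.1 : ℝ)| := max_eq_right_iff.mp h
    linarith [Real.rpow_le_rpow_of_exponent_le this (show 2 * s₂ ≤ 2 * s₁ by linarith)]
  · linarith

lemma le_freqMax_of_notMem_Lam {K : ℕ} {k : ℤ × ℤ} (hk : k ∉ Lam K) : (K : ℝ) ≤ freqMax k := by
  have hK : (K : ℤ) ≤ |k.1| ∨ (K : ℤ) ≤ |k.2| := by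
    simp only [Lam, Finset.mem_product, Finset.mem_Ioo] at hk
    rw [le_abs, le_abs]
    omega
  have h₁ : |(k.1 : ℝ)| ≤ freqMax k := (le_max_left _ _).trans (le_max_right _ _)
  have h₂ : |2 * (k.2 : ℝ)| ≤ freqMax k := (le_max_right _ _).trans (le_max_right _ _)
  rw [abs_mul, abs_two] at h₂
  rcases hK with h | h
  · have : (K : ℝ) ≤ |(k.1 : ℝ)| := by exact_mod_cast h
    linarith
  · have : (K : ℝ) ≤ |(k.2 : ℝ)| := by exact_mod_cast h
    linarith [abs_nonneg (k.2 : ℝ)]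

lemma sq_rpow_neg_le {M K α : ℝ} (hM : 1 ≤ M) (hK : 0 ≤ K) (hKM : K ≤ M) (hα : 0 ≤ α) :
    (M ^ 2) ^ (-α) ≤ 2 ^ α * (1 + K ^ 2) ^ (-α) := by
  have hle : (1 + K ^ 2) / 2 ≤ M ^ 2 := by nlinarith
  calc (M ^ 2) ^ (-α) ≤ ((1 + K ^ 2) / 2) ^ (-α) :=
        Real.rpow_le_rpow_of_nonpos (by positivity) hle (by linarith)
    _ = 2 ^ α * (1 + K ^ 2) ^ (-α) := by
        rw [Real.div_rpow (by positivity) zero_le_two, Real.rpow_neg zero_le_two, div_inv_eq_mul,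
          mul_comm]

lemma aW_le_of_notMem_Lam {s₁ s₂ t₁ t₂ : ℝ} (ht₂ : 0 ≤ t₂) (htt : t₂ ≤ t₁) (hts : t₁ ≤ s₂)
    (hss : s₂ ≤ s₁) {K : ℕ} {k : ℤ × ℤ} (hk : k ∉ Lam K) :
    aW (t₁, t₂) k ≤ 3 * 2 ^ (s₂ - t₁) * (1 + (K : ℝ) ^ 2) ^ (-(s₂ - t₁)) * aW (s₁, s₂) k := by
  have hM := one_le_freqMax k
  have hsplit : freqMax k ^ (2 * t₁) = (freqMax k ^ 2) ^ (-(s₂ - t₁)) * freqMax k ^ (2 * s₂) := by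
    rw [← Real.rpow_two, ← Real.rpow_mul (by linarith), ← Real.rpow_add (by linarith)]
    ring_nf
  calc aW (t₁, t₂) k ≤ 3 * freqMax k ^ (2 * t₁) := aW_le_three_mul_freqMax_rpow ht₂ htt k
    _ = 3 * (freqMax k ^ 2) ^ (-(s₂ - t₁)) * freqMax k ^ (2 * s₂) := by rw [hsplit]; ring
    _ ≤ 3 * (2 ^ (s₂ - t₁) * (1 + (K : ℝ) ^ 2) ^ (-(s₂ - t₁))) * aW (s₁, s₂) k := by
        gcongr
        · exact sq_rpow_neg_le hM K.cast_nonneg (le_freqMax_of_notMem_Lam hk) (by linarith)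
        · exact freqMax_rpow_le_aW hss k
    _ = _ := by ring

lemma normHs_le_of_weighted_coef_le {s t : ℝ × ℝ} {f g : Omg → ℂ} {c : ℝ} (hc : 0 ≤ c)
    (hf : Summable fun k => aW s k * ‖coef k f‖ ^ 2)
    (hgf : ∀ k, aW t k * ‖coef k g‖ ^ 2 ≤ c * (aW s k * ‖coef k f‖ ^ 2)) :
    normHs t g ≤ Real.sqrt c * normHs s f := by
  have hg_nonneg : ∀ k, 0 ≤ aW t k * ‖coef k g‖ ^ 2 := fun k =>
    mul_nonneg (aW_nonneg t k) (sq_nonneg _)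
  rw [normHs, normHs, ← Real.sqrt_mul hc, ← tsum_mul_left]
  exact Real.sqrt_le_sqrt <| Summable.tsum_le_tsum hgf
    ((hf.mul_left c).of_nonneg_of_le hg_nonneg hgf) (hf.mul_left c)

/-- Lemma 3.1: `‖J − J_K‖_{H^s→H^t} ≤ C (1+K²)^{−α/2}`. -/
theorem stmt3 (s₁ s₂ t₁ t₂ : ℝ) (ht₂ : 0 ≤ t₂) (htt : t₂ ≤ t₁) (hts : t₁ < s₂) (hss : s₂ ≤ s₁) :
    ∃ C > 0, ∀ K : ℕ, 1 ≤ K → ∀ f : Omg → ℂ, MemHs (s₁, s₂) f →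
      normHs (t₁, t₂) (fun p => f p - PL (Lam K) f p) ≤
        C * (1 + (K : ℝ) ^ 2) ^ (-((s₂ - t₁) / 2)) * normHs (s₁, s₂) f := by
  refine ⟨Real.sqrt (3 * 2 ^ (s₂ - t₁)), by positivity, fun K _ f hf => ?_⟩
  have hcoef : ∀ k, aW (t₁, t₂) k * ‖coef k (fun p => f p - PL (Lam K) f p)‖ ^ 2 ≤
      3 * 2 ^ (s₂ - t₁) * (1 + (K : ℝ) ^ 2) ^ (-(s₂ - t₁)) * (aW (s₁, s₂) k * ‖coef k f‖ ^ 2) := by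
    intro k
    rw [coef_sub_PL (hf.1.integrable one_le_two)]
    split_ifs with hk
    · have := aW_nonneg (s₁, s₂) k
      rw [norm_zero, zero_pow two_ne_zero, mul_zero]
      positivity
    · rw [← mul_assoc]
      exact mul_le_mul_of_nonneg_right (aW_le_of_notMem_Lam ht₂ htt hts.le hss hk) (by positivity)
  have hsqrt : Real.sqrt (3 * 2 ^ (s₂ - t₁) * (1 + (K : ℝ) ^ 2) ^ (-(s₂ - t₁)))
      = Real.sqrt (3 * 2 ^ (s₂ - t₁)) * (1 + (K : ℝ) ^ 2) ^ (-((s₂ - t₁) / 2)) := by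
    rw [Real.sqrt_mul (by positivity), Real.sqrt_eq_rpow, Real.sqrt_eq_rpow,
      ← Real.rpow_mul (by positivity)]
    ring_nf
  rw [← hsqrt]
  exact normHs_le_of_weighted_coef_le (by positivity) hf.2 hcoef

end
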